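/- arXiv:2102.05711 — 6 statements merged into one kernel-verified Lean document; each statement's English description precedes it below -/
import Mathlib

section
/- If I : ℝ≥0^n → ℝ≥0^n is a standard interference function (positive, monotone, and scalable: α • I(p) > I(α • p) componentwise for all α > 1) and the fixed-point problem p = I(p) has a feasible point p' with I(p') ≤ p', then I has at most one fixed point. -/
lemma fixed_le (n : ℕ) (I : (Fin n → ℝ) → (Fin n → ℝ))
    (hmono : ∀ p q : Fin n → ℝ, 0 ≤ q → q ≤ p → I q ≤ I p)
    (hscal : ∀ α : ℝ, 1 < α → ∀ p : Fin n → ℝ, 0 ≤ p → ∀ j, I (α • p) j < α * I p j)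
    (p q : Fin n → ℝ) (hp : 0 ≤ p) (hfp : I p = p) (hq : 0 ≤ q) (hfq : I q = q)
    (hqpos : ∀ j, 0 < q j) : p ≤ q := by
  rcases Nat.eq_zero_or_pos n with hn | hn
  · intro j; exact absurd j.2 (by omega)
  have : Nonempty (Fin n) := ⟨⟨0, hn⟩⟩
  have hne : (Finset.univ : Finset (Fin n)).Nonempty := Finset.univ_nonempty
  obtain ⟨j0, -, hj0⟩ := Finset.exists_max_image Finset.univ (fun j => p j / q j) hne
  set α := p j0 / q j0 with hα
  rcases le_or_gt α 1 with h1 | h1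
  · intro j
    have := hj0 j (Finset.mem_univ j)
    have : p j / q j ≤ 1 := le_trans this h1
    exact (div_le_one (hqpos j)).mp this
  · exfalso
    have hle : p ≤ α • q := by
      intro j
      have h := hj0 j (Finset.mem_univ j)
      calc p j = (p j / q j) * q j := by field_simp [ne_of_gt (hqpos j)]
        _ ≤ α * q j := by
          exact mul_le_mul_of_nonneg_right h (hqpos j).le
    have h2 : I p j0 ≤ I (α • q) j0 := hmono _ _ hp hle j0
    have h3 : I (α • q) j0 < α * I q j0 := hscal α h1 q hq j0
    have h4 : α * I q j0 = p j0 := by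
      rw [hfq, hα]; field_simp [ne_of_gt (hqpos j0)]
    rw [hfp] at h2
    nlinarith
/-- A standard interference function has at most one fixed point, given a
feasible point `p'` with `I p' ≤ p'`. -/
theorem stmt_0 (n : ℕ) (I : (Fin n → ℝ) → (Fin n → ℝ))
    (hpos : ∀ p : Fin n → ℝ, 0 ≤ p → ∀ j, 0 < I p j)
    (hmono : ∀ p q : Fin n → ℝ, 0 ≤ q → q ≤ p → I q ≤ I p)
    (hscal : ∀ α : ℝ, 1 < α → ∀ p : Fin n → ℝ, 0 ≤ p → ∀ j, I (α • p) j < α * I p j)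
    (p' : Fin n → ℝ) (hp' : 0 ≤ p') (hfeas : I p' ≤ p') :
    ∀ p q : Fin n → ℝ, 0 ≤ p → I p = p → 0 ≤ q → I q = q → p = q := by
  intro p q hp hfp hq hfq
  have hppos : ∀ j, 0 < p j := fun j => hfp ▸ hpos p hp j
  have hqpos : ∀ j, 0 < q j := fun j => hfq ▸ hpos q hq j
  exact le_antisymm (fixed_le n I hmono hscal p q hp hfp hq hfq hqpos)
    (fixed_le n I hmono hscal q p hq hfq hp hfp hppos)
end

section
/- If I is a standard interference function on nonnegative vectors in ℝ^n and c > 0 is a constant vector, then the capped function Î(p) := min(I(p), c) (componentwise minimum) is also a standard interference function. -/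
/-- Capping a standard interference function componentwise by a positive vector `c`
yields another standard interference function. -/
theorem stmt_4 (n : ℕ) (I : (Fin n → ℝ) → (Fin n → ℝ))
    (hpos : ∀ p : Fin n → ℝ, 0 ≤ p → ∀ j, 0 < I p j)
    (hmono : ∀ p q : Fin n → ℝ, 0 ≤ q → q ≤ p → I q ≤ I p)
    (hscal : ∀ α : ℝ, 1 < α → ∀ p : Fin n → ℝ, 0 ≤ p → ∀ j, I (α • p) j < α * I p j)
    (c : Fin n → ℝ) (hc : ∀ j, 0 < c j) :
    (∀ p : Fin n → ℝ, 0 ≤ p → ∀ j, 0 < min (I p j) (c j)) ∧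
    (∀ p q : Fin n → ℝ, 0 ≤ q → q ≤ p →
      (fun j => min (I q j) (c j)) ≤ fun j => min (I p j) (c j)) ∧
    (∀ α : ℝ, 1 < α → ∀ p : Fin n → ℝ, 0 ≤ p →
      ∀ j, min (I (α • p) j) (c j) < α * min (I p j) (c j)) := by
  refine ⟨fun p hp j => lt_min (hpos p hp j) (hc j),
    fun p q hq hqp j => min_le_min (hmono p q hq hqp j) le_rfl,
    fun α hα p hp j => ?_⟩
  rcases le_or_gt (I p j) (c j) with h | h
  · rw [min_eq_left h]
    exact lt_of_le_of_lt (min_le_left _ _) (hscal α hα p hp j)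
  · rw [min_eq_right h.le]
    calc min (I (α • p) j) (c j) ≤ c j := min_le_right _ _
      _ < α * c j := lt_mul_of_one_lt_left (hc j) hα
end

section
/- Scalability of a standard interference function implies that I(0) need not be considered for uniqueness: if I is positive, monotone, and scalable, and p, p' are two fixed points of I with p ≠ p', then defining α = max_j p'_j / p_j > 1 (WLOG), the inequality p' ≤ α • p together with scalability yields the contradiction p'_j < α p_j for the index j achieving the maximum; hence any standard interference function has at most one fixed point on the strictly positive orthant. -/
lemma stmt_5_aux (n : ℕ) (I : (Fin n → ℝ) → (Fin n → ℝ))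
    (hmono : ∀ p q : Fin n → ℝ, 0 ≤ q → q ≤ p → I q ≤ I p)
    (hscal : ∀ α : ℝ, 1 < α → ∀ p : Fin n → ℝ, 0 ≤ p → ∀ j, I (α • p) j < α * I p j)
    (p p' : Fin n → ℝ) (hp : ∀ j, 0 < p j) (hfp : I p = p)
    (hp' : ∀ j, 0 < p' j) (hfp' : I p' = p') : p' ≤ p := by
  by_contra h
  simp only [Pi.le_def, not_forall, not_le] at h
  obtain ⟨j0, hj0⟩ := h
  have hne : (Finset.univ : Finset (Fin n)).Nonempty := ⟨j0, Finset.mem_univ j0⟩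
  set α := Finset.univ.sup' hne (fun j => p' j / p j) with hα
  obtain ⟨j1, _, hj1⟩ := Finset.exists_mem_eq_sup' hne (fun j => p' j / p j)
  have hα1 : 1 < α := by
    have : p' j0 / p j0 ≤ α := Finset.le_sup' (f := fun j => p' j / p j) (Finset.mem_univ j0)
    have h1 : 1 < p' j0 / p j0 := (one_lt_div (hp j0)).mpr hj0
    linarith
  have hle : p' ≤ α • p := by
    intro j
    have : p' j / p j ≤ α := Finset.le_sup' (f := fun j => p' j / p j) (Finset.mem_univ j)
    have := (div_le_iff₀ (hp j)).mp this
    simpa [mul_comm] using this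
  have hpnn : (0 : Fin n → ℝ) ≤ p := fun j => (hp j).le
  have hpnn' : (0 : Fin n → ℝ) ≤ p' := fun j => (hp' j).le
  have key : p' j1 ≤ I (α • p) j1 := by
    have := hmono (α • p) p' hpnn' hle j1
    rwa [hfp'] at this
  have key2 : I (α • p) j1 < α * p j1 := by
    have := hscal α hα1 p hpnn j1
    rwa [hfp] at this
  have heq : α * p j1 = p' j1 := by
    rw [hα, hj1, div_mul_cancel₀]
    exact (hp j1).ne'
  linarith

/-- A standard interference function has at most one fixed point on the strictly
positive orthant. -/
theorem stmt_5 (n : ℕ) (I : (Fin n → ℝ) → (Fin n → ℝ))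
    (hpos : ∀ p : Fin n → ℝ, 0 ≤ p → ∀ j, 0 < I p j)
    (hmono : ∀ p q : Fin n → ℝ, 0 ≤ q → q ≤ p → I q ≤ I p)
    (hscal : ∀ α : ℝ, 1 < α → ∀ p : Fin n → ℝ, 0 ≤ p → ∀ j, I (α • p) j < α * I p j) :
    ∀ p p' : Fin n → ℝ, (∀ j, 0 < p j) → I p = p →
      (∀ j, 0 < p' j) → I p' = p' → p = p' := by
  intro p p' hp hfp hp' hfp'
  exact le_antisymm (stmt_5_aux n I hmono hscal p' p hp' hfp' hp hfp)
    (stmt_5_aux n I hmono hscal p p' hp hfp hp' hfp')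
end

section
/- If I is a standard interference function (positive, monotone, scalable) and c > 0 is a cap vector, then the two-sided function T with components T_j(p) = min(I_j(p), c_j²/I_j(p)) · max(1, I_j(p)/c_j) / max(1, I_j(p)/c_j) — equivalently T_j(p) = I_j(p) when I_j(p) ≤ c_j and T_j(p) = c_j²/I_j(p) otherwise — satisfies two-sided scalability: for every α > 1 and p ≥ 0, (1/α) • T(p) < T(α • p) < α • T(p) componentwise. -/
/-- The two-sided update built from a standard interference function satisfies
two-sided scalability: `(1/α) • T(p) < T(α • p) < α • T(p)` for all `α > 1`. -/
theorem stmt_9 (n : ℕ) (I : (Fin n → ℝ) → (Fin n → ℝ))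
    (hpos : ∀ p : Fin n → ℝ, 0 ≤ p → ∀ j, 0 < I p j)
    (hmono : ∀ p q : Fin n → ℝ, 0 ≤ q → q ≤ p → I q ≤ I p)
    (hscal : ∀ α : ℝ, 1 < α → ∀ p : Fin n → ℝ, 0 ≤ p → ∀ j, I (α • p) j < α * I p j)
    (c : Fin n → ℝ) (hc : ∀ j, 0 < c j)
    (T : (Fin n → ℝ) → (Fin n → ℝ))
    (hT : ∀ p j, T p j = if I p j ≤ c j then I p j else (c j) ^ 2 / I p j) :
    ∀ α : ℝ, 1 < α → ∀ p : Fin n → ℝ, 0 ≤ p →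
      ∀ j, (1 / α) * T p j < T (α • p) j ∧ T (α • p) j < α * T p j := by
  intro α hα p hp j
  have hα0 : (0:ℝ) < α := lt_trans one_pos hα
  have hαp : (0:Fin n → ℝ) ≤ α • p := by
    intro i; exact mul_nonneg hα0.le (hp i)
  have hle : p ≤ α • p := by
    intro i
    have : 1 * p i ≤ α * p i := mul_le_mul_of_nonneg_right hα.le (hp i)
    simpa using this
  set a := I p j with ha
  set b := I (α • p) j with hb
  have ha0 : 0 < a := hpos p hp j
  have hb0 : 0 < b := hpos _ hαp j
  have hc0 : 0 < c j := hc j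
  have hab : a ≤ b := hmono (α • p) p hp hle j
  have hba : b < α * a := hscal α hα p hp j
  rw [hT, hT]
  by_cases h1 : a ≤ c j
  · by_cases h2 : b ≤ c j
    · simp only [← ha, ← hb, h1, h2, if_pos]
      constructor
      · calc (1/α) * a < 1 * a := by
              apply mul_lt_mul_of_pos_right _ ha0
              rw [div_lt_one hα0]; exact hα
            _ = a := one_mul a
            _ ≤ b := hab
      · exact hba
    · simp only [← ha, ← hb, h1, h2, if_pos, if_neg, not_false_iff]
      push_neg at h2
      constructor
      · rw [div_mul_eq_mul_div, div_lt_div_iff₀ hα0 hb0]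
        nlinarith [mul_lt_mul_of_pos_left hba ha0, mul_le_mul_of_nonneg_left (mul_self_le_mul_self ha0.le h1) hα0.le]
      · calc c j ^ 2 / b < c j ^ 2 / c j := by
              apply div_lt_div_of_pos_left (by positivity) hc0 h2
            _ = c j := by rw [sq, mul_div_assoc, div_self hc0.ne', mul_one]
            _ < α * a := lt_trans h2 hba
  · have h2 : ¬ b ≤ c j := by
      push_neg at h1 ⊢; exact lt_of_lt_of_le h1 hab
    simp only [← ha, ← hb, h1, h2, if_neg, not_false_iff]
    push_neg at h1 h2
    constructor
    · rw [div_mul_eq_mul_div, div_lt_div_iff₀ hα0 hb0, mul_comm (1:ℝ), mul_one,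
        div_mul_eq_mul_div, div_lt_iff₀ ha0]
      calc c j ^ 2 * b < c j ^ 2 * (α * a) := by
            exact mul_lt_mul_of_pos_left hba (by positivity)
        _ = c j ^ 2 * α * a := by ring
    · rw [mul_div_assoc', lt_div_iff₀ ha0, div_mul_eq_mul_div, div_lt_iff₀ hb0]
      have h3 : a < α * b := lt_of_le_of_lt hab (by nlinarith)
      have h4 := mul_lt_mul_of_pos_left h3 (show (0:ℝ) < c j ^ 2 by positivity)
      nlinarith
end

section
/- The total power minimization problem: minimize Σ_j p_j subject to p_j ≥ (A p + b)_j and 0 ≤ p_j ≤ c_j for all j (with A entrywise nonnegative, b entrywise positive, c entrywise positive) has a nonempty feasible set if and only if the unconstrained fixed point p* of p = A p + b exists with p* ≤ c componentwise; and in that case p* is the unique optimal solution. -/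
open Finset Filter Topology

lemma mulVec_mono' {n : ℕ} {A : Matrix (Fin n) (Fin n) ℝ}
    (hA : ∀ i j, 0 ≤ A i j) {x y : Fin n → ℝ} (h : ∀ j, x j ≤ y j) :
    ∀ j, A.mulVec x j ≤ A.mulVec y j := by
  intro j
  simp only [Matrix.mulVec, dotProduct]
  exact Finset.sum_le_sum fun i _ => mul_le_mul_of_nonneg_left (h i) (hA j i)

def iterSeq {n : ℕ} (A : Matrix (Fin n) (Fin n) ℝ) (b : Fin n → ℝ) : ℕ → Fin n → ℝ
  | 0 => 0
  | k+1 => A.mulVec (iterSeq A b k) + b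

/-- The total power minimization problem with SINR constraints `p ≥ A p + b` and
power budgets `p ≤ c` is feasible iff the fixed point of `p = A p + b` exists and
respects the budget, in which case the fixed point is the unique optimum. -/
theorem stmt_14 (n : ℕ) (A : Matrix (Fin n) (Fin n) ℝ)
    (hA : ∀ i j, 0 ≤ A i j) (b c : Fin n → ℝ)
    (hb : ∀ i, 0 < b i) (hc : ∀ i, 0 < c i) :
    ((∃ p : Fin n → ℝ, (∀ j, 0 ≤ p j) ∧ (∀ j, (A.mulVec p + b) j ≤ p j) ∧
        ∀ j, p j ≤ c j) ↔
      (∃ ps : Fin n → ℝ, (∀ j, 0 ≤ ps j) ∧ ps = A.mulVec ps + b ∧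
        ∀ j, ps j ≤ c j)) ∧
    (∀ ps : Fin n → ℝ, (∀ j, 0 ≤ ps j) → ps = A.mulVec ps + b →
      (∀ j, ps j ≤ c j) →
      ∀ p : Fin n → ℝ, (∀ j, 0 ≤ p j) → (∀ j, (A.mulVec p + b) j ≤ p j) →
        (∀ j, p j ≤ c j) →
        (∀ j, ps j ≤ p j) ∧ (∑ j, ps j ≤ ∑ j, p j) ∧
          (∑ j, p j = ∑ j, ps j → p = ps)) := by
  -- key optimality lemma
  have key : ∀ ps : Fin n → ℝ, (∀ j, 0 ≤ ps j) → ps = A.mulVec ps + b →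
      (∀ j, ps j ≤ c j) →
      ∀ p : Fin n → ℝ, (∀ j, 0 ≤ p j) → (∀ j, (A.mulVec p + b) j ≤ p j) →
        (∀ j, p j ≤ c j) → ∀ j, ps j ≤ p j := by
    intro ps hps0 hpsfix hpsc p hp0 hpfeas hpc
    rcases Nat.eq_zero_or_pos n with hn | hn
    · subst hn; exact fun j => j.elim0
    -- choose ε
    obtain ⟨j0, _, hj0⟩ := Finset.exists_min_image (Finset.univ : Finset (Fin n))
      (fun j => b j / c j) ⟨⟨0, hn⟩, Finset.mem_univ _⟩
    set ε : ℝ := min 1 (b j0 / c j0) with hε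
    have hε0 : 0 < ε := lt_min one_pos (div_pos (hb j0) (hc j0))
    have hε1 : ε ≤ 1 := min_le_left _ _
    have hr0 : 0 ≤ 1 - ε := by linarith
    have hr1 : 1 - ε < 1 := by linarith
    -- ε * x ≤ b for x ≤ c, x ≥ 0
    have hεb : ∀ (x : Fin n → ℝ), (∀ j, 0 ≤ x j) → (∀ j, x j ≤ c j) →
        ∀ j, ε * x j ≤ b j := by
      intro x hx0 hxc j
      have h1 : ε ≤ b j / c j := le_trans (min_le_right _ _) (hj0 j (Finset.mem_univ j))
      calc ε * x j ≤ (b j / c j) * c j :=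
            mul_le_mul h1 (hxc j) (hx0 j) (le_of_lt (div_pos (hb j) (hc j)))
        _ = b j := div_mul_cancel₀ _ (ne_of_gt (hc j))
    -- A x ≤ (1-ε) x for x = p and x = ps
    have hAp : ∀ j, A.mulVec p j ≤ (1 - ε) * p j := by
      intro j
      have := hpfeas j
      simp only [Pi.add_apply] at this
      have := hεb p hp0 hpc j
      nlinarith [hpfeas j, hεb p hp0 hpc j]
    have hAps : ∀ j, A.mulVec ps j ≤ (1 - ε) * ps j := by
      intro j
      have h1 : ps j = A.mulVec ps j + b j := by
        have := congrFun hpsfix j; simpa using this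
      have := hεb ps hps0 hpsc j
      nlinarith
    -- main induction
    have main : ∀ k : ℕ, ∀ j, ps j ≤ p j + (1 - ε) ^ k * (ps j + p j) := by
      intro k
      induction k with
      | zero => intro j; simp; nlinarith [hp0 j, hps0 j]
      | succ k ih =>
        intro j
        have h1 : ps j = A.mulVec ps j + b j := by
          have := congrFun hpsfix j; simpa using this
        have h2 : A.mulVec ps j ≤ A.mulVec (fun i => p i + (1 - ε) ^ k * (ps i + p i)) j :=
          mulVec_mono' hA ih j
        have h3 : A.mulVec (fun i => p i + (1 - ε) ^ k * (ps i + p i)) j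
            = A.mulVec p j + (1 - ε) ^ k * A.mulVec (fun i => ps i + p i) j := by
          simp only [Matrix.mulVec, dotProduct, ← Finset.sum_add_distrib,
            Finset.mul_sum]
          congr 1; ext i; ring
        have h4 : A.mulVec (fun i => ps i + p i) j ≤ (1 - ε) * (ps j + p j) := by
          have : A.mulVec (fun i => ps i + p i) j = A.mulVec ps j + A.mulVec p j := by
            simp only [Matrix.mulVec, dotProduct, ← Finset.sum_add_distrib]
            congr 1; ext i; ring
          rw [this]
          have := hAp j; have := hAps j; linarith
        have h5 : A.mulVec p j + b j ≤ p j := hpfeas j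
        have hpow : (0:ℝ) ≤ (1 - ε) ^ k := pow_nonneg hr0 k
        calc ps j = A.mulVec ps j + b j := h1
          _ ≤ A.mulVec p j + (1 - ε) ^ k * A.mulVec (fun i => ps i + p i) j + b j := by
              rw [← h3]; linarith
          _ ≤ p j + (1 - ε) ^ k * ((1 - ε) * (ps j + p j)) := by
              nlinarith
          _ = p j + (1 - ε) ^ (k + 1) * (ps j + p j) := by ring
    -- take limit
    intro j
    by_contra hcon
    push_neg at hcon
    set δ := ps j - p j with hδ
    have hδ0 : 0 < δ := by linarith
    have hM : 0 ≤ ps j + p j := by linarith [hp0 j, hps0 j]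
    obtain ⟨k, hk⟩ := exists_pow_lt_of_lt_one (div_pos hδ0 (by linarith : (0:ℝ) < ps j + p j + 1)) hr1
    have := main k j
    have h2 : (1 - ε) ^ k * (ps j + p j) ≤ (1 - ε) ^ k * (ps j + p j + 1) :=
      mul_le_mul_of_nonneg_left (by linarith) (pow_nonneg hr0 k)
    have h3 : (1 - ε) ^ k * (ps j + p j + 1) < δ := by
      rw [lt_div_iff₀ (by linarith : (0:ℝ) < ps j + p j + 1)] at hk
      linarith [hk]
    linarith
  constructor
  · constructor
    · -- feasible → fixed point exists
      rintro ⟨p, hp0, hpfeas, hpc⟩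
      set s := iterSeq A b with hs
      have hle : ∀ k j, s k j ≤ p j := by
        intro k
        induction k with
        | zero => intro j; simpa [hs, iterSeq] using hp0 j
        | succ k ih =>
          intro j
          have : A.mulVec (s k) j ≤ A.mulVec p j := mulVec_mono' hA ih j
          have h2 := hpfeas j
          simp only [Pi.add_apply] at h2
          simp only [hs, iterSeq, Pi.add_apply]
          linarith
      have hmono : ∀ j, Monotone fun k => s k j := by
        intro j
        apply monotone_nat_of_le_succ
        intro k
        revert j
        induction k with
        | zero =>
          intro j
          simp only [hs, iterSeq, Matrix.mulVec_zero, Pi.add_apply, Pi.zero_apply,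
            zero_add]
          linarith [hb j]
        | succ k ih =>
          intro j
          have h1 := mulVec_mono' hA (x := iterSeq A b k) (y := iterSeq A b (k+1)) ih j
          simp only [hs, iterSeq, Pi.add_apply] at h1 ⊢
          linarith
      set L : Fin n → ℝ := fun j => ⨆ k, s k j with hL
      have hbdd : ∀ j, BddAbove (Set.range fun k => s k j) := by
        intro j; exact ⟨p j, by rintro x ⟨k, rfl⟩; exact hle k j⟩
      have htend : ∀ j, Tendsto (fun k => s k j) atTop (𝓝 (L j)) := fun j =>
        tendsto_atTop_ciSup (hmono j) (hbdd j)
      have htend2 : ∀ j, Tendsto (fun k => A.mulVec (s k) j + b j) atTop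
          (𝓝 (A.mulVec L j + b j)) := by
        intro j
        have : Tendsto (fun k => A.mulVec (s k) j) atTop (𝓝 (A.mulVec L j)) := by
          simp only [Matrix.mulVec, dotProduct]
          exact tendsto_finset_sum _ fun i _ => (htend i).const_mul _
        exact this.add_const _
      have hfix : L = A.mulVec L + b := by
        funext j
        have h1 : Tendsto (fun k => s (k+1) j) atTop (𝓝 (L j)) :=
          (htend j).comp (tendsto_add_atTop_nat 1)
        have h2 : (fun k => s (k+1) j) = fun k => A.mulVec (s k) j + b j := by
          funext k; simp [hs, iterSeq]
        rw [h2] at h1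
        exact tendsto_nhds_unique h1 (htend2 j)
      refine ⟨L, ?_, hfix, ?_⟩
      · intro j
        have := le_ciSup (hbdd j) 0
        simpa [hs, iterSeq] using this
      · intro j
        exact ciSup_le fun k => (hle k j).trans (hpc j)
    · rintro ⟨ps, hps0, hfix, hpsc⟩
      exact ⟨ps, hps0, fun j => by rw [← hfix] , hpsc⟩
  · intro ps hps0 hfix hpsc p hp0 hpfeas hpc
    have hle := key ps hps0 hfix hpsc p hp0 hpfeas hpc
    refine ⟨hle, Finset.sum_le_sum fun j _ => hle j, ?_⟩
    intro hsum
    funext j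
    by_contra hne
    have hlt : ps j < p j := lt_of_le_of_ne (hle j) (Ne.symm hne)
    have : ∑ i, ps i < ∑ i, p i :=
      Finset.sum_lt_sum (fun i _ => hle i) ⟨j, Finset.mem_univ j, hlt⟩
    linarith
end

section
/- If the feasible set of problem p ≥ A p + b, p ≤ c (A ≥ 0 entrywise, b > 0, c > 0) is nonempty, then the fixed point p* reached by the capped iteration p(n+1) = min(A p(n) + b, c) from p(0) = c equals the global optimum of the total power minimization, i.e., p* = (Id − A)⁻¹ b and p* minimizes Σ_j p_j over the feasible set. -/
/-- Key comparison lemma: if `q` dominates `A q + b` and `x ≤ A x + t • b`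
componentwise, then `x ≤ t • q` componentwise. -/
lemma aux_le {n : ℕ} (hn : 0 < n) (A : Matrix (Fin n) (Fin n) ℝ)
    (hA : ∀ i j, 0 ≤ A i j) (b q x : Fin n → ℝ) (hb : ∀ i, 0 < b i)
    (hq0 : ∀ j, 0 ≤ q j)
    (hq : ∀ j, (A.mulVec q) j + b j ≤ q j) (t : ℝ) (ht : 0 ≤ t)
    (hx : ∀ j, x j ≤ (A.mulVec x) j + t * b j) : ∀ j, x j ≤ t * q j := by
  haveI : Nonempty (Fin n) := ⟨⟨0, hn⟩⟩
  have hAq0 : ∀ j, 0 ≤ (A.mulVec q) j := by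
    intro j
    simp only [Matrix.mulVec, dotProduct]
    exact Finset.sum_nonneg fun k _ => mul_nonneg (hA j k) (hq0 k)
  have hqpos : ∀ j, 0 < q j := fun j =>
    lt_of_lt_of_le (lt_of_lt_of_le (hb j) (le_add_of_nonneg_left (hAq0 j))) (hq j)
  set δ := Finset.univ.sup' Finset.univ_nonempty (fun i => x i / q i) with hδ
  have hδ_le : ∀ j, x j ≤ δ * q j := by
    intro j
    have h1 : x j / q j ≤ δ :=
      Finset.le_sup' (fun i => x i / q i) (Finset.mem_univ j)
    calc x j = x j / q j * q j := by
          rw [div_mul_cancel₀ _ (hqpos j).ne']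
    _ ≤ δ * q j := mul_le_mul_of_nonneg_right h1 (hqpos j).le
  by_cases hδt : δ ≤ t
  · intro j
    exact (hδ_le j).trans (mul_le_mul_of_nonneg_right hδt (hqpos j).le)
  · exfalso
    push_neg at hδt
    obtain ⟨i0, -, hi0⟩ := Finset.exists_mem_eq_sup' Finset.univ_nonempty
      (fun i => x i / q i)
    have hxi0 : x i0 = δ * q i0 := by
      have : x i0 / q i0 = δ := hi0.symm
      field_simp [(hqpos i0).ne'] at this ⊢
      linarith [this]
    have h1 : (A.mulVec x) i0 ≤ δ * (A.mulVec q) i0 := by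
      simp only [Matrix.mulVec, dotProduct, Finset.mul_sum]
      refine Finset.sum_le_sum fun k _ => ?_
      calc A i0 k * x k ≤ A i0 k * (δ * q k) :=
            mul_le_mul_of_nonneg_left (hδ_le k) (hA i0 k)
      _ = δ * (A i0 k * q k) := by ring
    have h2 : (A.mulVec q) i0 ≤ q i0 - b i0 := by linarith [hq i0]
    have h3 : x i0 ≤ δ * (q i0 - b i0) + t * b i0 := by
      have := hx i0
      have hδ0 : 0 ≤ δ := le_trans ht hδt.le
      nlinarith [h1, h2]
    nlinarith [hb i0, hxi0]

/-- If the constraint set `p ≥ A p + b`, `0 ≤ p ≤ c` is nonempty, the capped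
iteration from `p(0) = c` converges to `p* = (Id - A)⁻¹ b`, which minimizes the
total power over the feasible set. -/
theorem stmt_17 (n : ℕ) (A : Matrix (Fin n) (Fin n) ℝ)
    (hA : ∀ i j, 0 ≤ A i j) (b c : Fin n → ℝ)
    (hb : ∀ i, 0 < b i) (hc : ∀ i, 0 < c i)
    (hfeas : ∃ q : Fin n → ℝ, (∀ j, 0 ≤ q j) ∧
      (∀ j, (A.mulVec q + b) j ≤ q j) ∧ ∀ j, q j ≤ c j)
    (p : ℕ → (Fin n → ℝ)) (h0 : p 0 = c)
    (hstep : ∀ m, p (m + 1) = fun j => min ((A.mulVec (p m) + b) j) (c j)) :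
    ∃ pstar : Fin n → ℝ,
      Filter.Tendsto p Filter.atTop (nhds pstar) ∧
      pstar = (1 - A)⁻¹.mulVec b ∧
      ∀ q : Fin n → ℝ, (∀ j, 0 ≤ q j) → (∀ j, (A.mulVec q + b) j ≤ q j) →
        (∀ j, q j ≤ c j) → ∑ j, pstar j ≤ ∑ j, q j := by
  rcases Nat.eq_zero_or_pos n with hn | hn
  · subst hn
    refine ⟨(1 - A)⁻¹.mulVec b, ?_, rfl, ?_⟩
    · have : p = fun _ => (1 - A)⁻¹.mulVec b := by
        funext m j; exact j.elim0
      rw [this]; exact tendsto_const_nhds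
    · intro q _ _ _; simp
  obtain ⟨q0, hq00, hq01, hq02⟩ := hfeas
  -- the iterates are nonnegative and antitone
  have hpos : ∀ m j, 0 ≤ p m j := by
    intro m
    induction m with
    | zero => intro j; rw [h0]; exact (hc j).le
    | succ m ih =>
      intro j
      rw [hstep m]
      refine le_min ?_ (hc j).le
      have : 0 ≤ (A.mulVec (p m)) j := by
        simp only [Matrix.mulVec, dotProduct]
        exact Finset.sum_nonneg fun k _ => mul_nonneg (hA j k) (ih k)
      simpa using add_nonneg this (hb j).le
  have hmono : ∀ m j, p (m + 1) j ≤ p m j := by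
    intro m
    induction m with
    | zero => intro j; rw [hstep 0, h0]; exact min_le_right _ _
    | succ m ih =>
      intro j
      rw [hstep (m + 1)]
      conv_rhs => rw [hstep m]
      refine min_le_min ?_ le_rfl
      simp only [Pi.add_apply]
      refine add_le_add_left ?_ _
      simp only [Matrix.mulVec, dotProduct]
      exact Finset.sum_le_sum fun k _ =>
        mul_le_mul_of_nonneg_left (ih k) (hA j k)
  have hanti : ∀ j, Antitone (fun m => p m j) :=
    fun j => antitone_nat_of_succ_le fun m => hmono m j
  set pstar : Fin n → ℝ := fun j => ⨅ m, p m j with hps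
  have hbdd : ∀ j, BddBelow (Set.range fun m => p m j) :=
    fun j => ⟨0, fun x ⟨m, hm⟩ => hm ▸ hpos m j⟩
  have htend : ∀ j, Filter.Tendsto (fun m => p m j) Filter.atTop (nhds (pstar j)) :=
    fun j => tendsto_atTop_ciInf (hanti j) (hbdd j)
  have htendp : Filter.Tendsto p Filter.atTop (nhds pstar) := by
    rw [tendsto_pi_nhds]; exact htend
  -- the limit is a fixed point of the capped map
  have hfix : ∀ j, pstar j = min ((A.mulVec pstar) j + b j) (c j) := by
    intro j
    have h1 : Filter.Tendsto (fun m => p (m + 1) j) Filter.atTop (nhds (pstar j)) :=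
      (htend j).comp (Filter.tendsto_add_atTop_nat 1)
    have h2 : Filter.Tendsto (fun m => p (m + 1) j) Filter.atTop
        (nhds (min ((A.mulVec pstar) j + b j) (c j))) := by
      have heq : (fun m => p (m + 1) j)
          = fun m => min ((A.mulVec (p m)) j + b j) (c j) := by
        funext m; rw [hstep m]; simp
      rw [heq]
      have hsum : Filter.Tendsto (fun m => (A.mulVec (p m)) j) Filter.atTop
          (nhds ((A.mulVec pstar) j)) := by
        simp only [Matrix.mulVec, dotProduct]
        exact tendsto_finset_sum _ fun k _ => (htend k).const_mul (A j k)
      exact ((hsum.add tendsto_const_nhds).min tendsto_const_nhds)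
    exact tendsto_nhds_unique h1 h2
  -- minimality: pstar ≤ q for any feasible q
  have hmin : ∀ q : Fin n → ℝ, (∀ j, 0 ≤ q j) → (∀ j, (A.mulVec q + b) j ≤ q j) →
      ∀ j, pstar j ≤ q j := by
    intro q hq0 hq1
    have := aux_le hn A hA b q pstar hb hq0
      (fun j => by simpa using hq1 j) 1 zero_le_one
      (fun j => by rw [hfix j]; simp)
    intro j; simpa using this j
  have hple : ∀ j, pstar j ≤ q0 j := hmin q0 hq00 hq01
  -- the cap is inactive at the fixed point
  have hfix' : ∀ j, pstar j = (A.mulVec pstar) j + b j := by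
    intro j
    rw [hfix j]
    refine min_eq_left ?_
    have h1 : (A.mulVec pstar) j ≤ (A.mulVec q0) j := by
      simp only [Matrix.mulVec, dotProduct]
      exact Finset.sum_le_sum fun k _ =>
        mul_le_mul_of_nonneg_left (hple k) (hA j k)
    have h2 := hq01 j
    have h3 := hq02 j
    simp only [Pi.add_apply] at h2
    linarith
  have hlin : (1 - A).mulVec pstar = b := by
    funext j
    rw [Matrix.sub_mulVec, Matrix.one_mulVec]
    have := hfix' j
    simp only [Pi.sub_apply]
    linarith
  -- (1 - A) is invertible
  have hinj : Function.Injective ((1 - A).mulVec) := by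
    have hker : ∀ x : Fin n → ℝ, (1 - A).mulVec x = 0 → x = 0 := by
      intro x hx
      have hAx : A.mulVec x = x := by
        have : ∀ j, x j - (A.mulVec x) j = 0 := by
          intro j
          have := congrFun hx j
          rwa [Matrix.sub_mulVec, Matrix.one_mulVec] at this
        funext j; have := this j; linarith
      have h1 : ∀ j, x j ≤ 0 := by
        have := aux_le hn A hA b q0 x hb hq00
          (fun j => by simpa using hq01 j) 0 le_rfl
          (fun j => by rw [hAx]; simp)
        intro j; have := this j; simpa using this
      have h2 : ∀ j, -x j ≤ 0 := by
        have := aux_le hn A hA b q0 (-x) hb hq00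
          (fun j => by simpa using hq01 j) 0 le_rfl
          (fun j => by rw [Matrix.mulVec_neg, hAx]; simp)
        intro j; simpa using this j
      funext j
      have := h1 j; have := h2 j
      simp only [Pi.zero_apply]; linarith [h1 j, h2 j]
    intro x y hxy
    have : (1 - A).mulVec (x - y) = 0 := by
      rw [Matrix.mulVec_sub, hxy, sub_self]
    have := hker _ this
    funext j
    have := congrFun this j
    simp only [Pi.sub_apply, Pi.zero_apply] at this
    linarith
  have hunit : IsUnit (1 - A) := Matrix.mulVec_injective_iff_isUnit.mp hinj
  have hdet : IsUnit (1 - A).det := (Matrix.isUnit_iff_isUnit_det _).mp hunit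
  have heq : pstar = (1 - A)⁻¹.mulVec b := by
    rw [← hlin, Matrix.mulVec_mulVec, Matrix.nonsing_inv_mul _ hdet,
      Matrix.one_mulVec]
  exact ⟨pstar, htendp, heq, fun q hq0 hq1 _ =>
    Finset.sum_le_sum fun j _ => hmin q hq0 hq1 j⟩
end
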